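/- arXiv:1807.08346 — 3 statements merged into one kernel-verified Lean document; each statement's English description precedes it below -/
import Mathlib

section
/- Let K ≥ 1 be a natural number and let λj > 0 and λm > 0 be real numbers, and set λ = λj + λm. Define π : {1,...,K+1} → ℝ by π(x) = (λj/λ)·(λm/λ)^(x−1) for 1 ≤ x ≤ K and π(K+1) = (λm/λ)^K. Then π satisfies the global balance equations of the Markov chain: λm·π(1) = λj·(1 − π(1)); λ·π(x) = λm·π(x−1) for every x with 2 ≤ x ≤ K; and λj·π(K+1) = λm·π(K). -/
/-! Writing `p = lm / l`, every balance equation reduces to `l * p ^ (n + 1) = lm * p ^ n`,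
i.e. to `l * p = lm`, together with `1 - lj / l = p`, which is `lj + lm = l`. -/

section

variable {F : Type*} [Field F]

theorem mul_div_pow_succ {l : F} (hl : l ≠ 0) (a : F) (n : ℕ) :
    l * (a / l) ^ (n + 1) = a * (a / l) ^ n := by
  rw [pow_succ', ← mul_assoc, mul_div_cancel₀ a hl]

theorem one_sub_div_eq_div_of_eq_add {l a b : F} (hl : l ≠ 0) (hab : l = a + b) :
    1 - a / l = b / l := by
  rw [one_sub_div hl, hab, add_sub_cancel_left]

end

/-- In the FIFO timeline model with `K` slots, rates `lj > 0` (source `j`),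
`lm > 0` (other sources) and total rate `l = lj + lm`, the vector
`π(x) = (lj/l)·(lm/l)^(x-1)` for `1 ≤ x ≤ K` and `π(K+1) = (lm/l)^K` satisfies the
global balance equations of the continuous-time Markov chain tracking the topmost
position of a post of source `j`:
`lm·π(1) = lj·(1 − π(1))`, `l·π(x) = lm·π(x−1)` for `2 ≤ x ≤ K`, and
`lj·π(K+1) = lm·π(K)`. -/
theorem fifo_stationary_satisfies_balance_equations
    (K : ℕ) (hK : 1 ≤ K) (lj lm : ℝ) (hlj : 0 < lj) (hlm : 0 < lm)
    (l : ℝ) (hl : l = lj + lm)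
    (π : ℕ → ℝ)
    (hπ : ∀ x, 1 ≤ x → x ≤ K → π x = (lj / l) * (lm / l) ^ (x - 1))
    (hπK1 : π (K + 1) = (lm / l) ^ K) :
    lm * π 1 = lj * (1 - π 1) ∧
      (∀ x, 2 ≤ x → x ≤ K → l * π x = lm * π (x - 1)) ∧
      lj * π (K + 1) = lm * π K := by
  have hl0 : l ≠ 0 := hl ▸ (add_pos hlj hlm).ne'
  refine ⟨?_, ?_, ?_⟩
  · rw [hπ 1 le_rfl hK, pow_zero, mul_one, one_sub_div_eq_div_of_eq_add hl0 hl, mul_div_assoc',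
      mul_div_assoc', mul_comm]
  · intro x h2 hxK
    obtain ⟨n, rfl⟩ : ∃ n, x = n + 1 + 1 := ⟨x - 2, by omega⟩
    rw [Nat.add_sub_cancel, hπ _ (by omega) hxK, hπ (n + 1) (by omega) (by omega),
      Nat.add_sub_cancel, Nat.add_sub_cancel, mul_left_comm, mul_div_pow_succ hl0, mul_left_comm]
  · obtain ⟨n, rfl⟩ : ∃ n, K = n + 1 := ⟨K - 1, by omega⟩
    rw [hπK1, hπ _ hK le_rfl, Nat.add_sub_cancel, mul_left_comm, ← mul_div_pow_succ hl0,
      ← mul_assoc, div_mul_cancel₀ lj hl0]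
end

section
/- Let K ≥ 1 be a natural number and let λj > 0 and λm > 0 be real numbers, and set λ = λj + λm. Suppose π : {1,...,K+1} → ℝ satisfies π(x) ≥ 0 for all x, Σ_{x=1}^{K+1} π(x) = 1, and the balance equations λm·π(1) = λj·(1 − π(1)), λ·π(x) = λm·π(x−1) for 2 ≤ x ≤ K, and λj·π(K+1) = λm·π(K). Then π is uniquely determined: π(x) = (λj/λ)·(λm/λ)^(x−1) for 1 ≤ x ≤ K and π(K+1) = (λm/λ)^K. -/
/-! The first balance equation rearranges to `l · π 1 = lj`, which forces `l ≠ 0` and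
`π 1 = lj / l`; the interior equations say that `π` is geometric with ratio `lm / l` on
`1, …, K`, and the last one gives `π (K + 1) = (lm / lj) · π K`. -/

theorem eq_mul_pow_of_succ_eq_mul {R : Type*} [Monoid R] {u : ℕ → R} {a r : R} {K : ℕ}
    (h₁ : u 1 = a) (hstep : ∀ n, 1 ≤ n → n < K → u (n + 1) = u n * r) :
    ∀ x, 1 ≤ x → x ≤ K → u x = a * r ^ (x - 1) := by
  intro x hx
  induction x, hx using Nat.le_induction with
  | base => simp [h₁]
  | succ n hn ih =>
    intro hnK
    rw [hstep n hn hnK, ih (by omega), mul_assoc, ← pow_succ, Nat.sub_add_cancel hn,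
      Nat.add_sub_cancel]

theorem fifo_stationary_unique_general
    (K : ℕ) (hK : 1 ≤ K) (lj lm : ℝ) (hlj : 0 < lj)
    (l : ℝ) (hl : l = lj + lm)
    (π : ℕ → ℝ)
    (hbal1 : lm * π 1 = lj * (1 - π 1))
    (hbal : ∀ x, 2 ≤ x → x ≤ K → l * π x = lm * π (x - 1))
    (hbalK1 : lj * π (K + 1) = lm * π K) :
    (∀ x, 1 ≤ x → x ≤ K → π x = (lj / l) * (lm / l) ^ (x - 1)) ∧
      π (K + 1) = (lm / l) ^ K := by
  have hlπ₁ : l * π 1 = lj := by rw [hl]; linarith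
  have hl₀ : l ≠ 0 := by rintro rfl; linarith
  have hπ₁ : π 1 = lj / l := by rw [← hlπ₁, mul_div_cancel_left₀ _ hl₀]
  have hstep : ∀ n, 1 ≤ n → n < K → π (n + 1) = π n * (lm / l) := fun n hn hnK => by
    rw [mul_div_assoc', eq_div_iff hl₀, mul_comm, mul_comm (π n), hbal (n + 1) (by omega) hnK,
      Nat.add_sub_cancel]
  have hgeom := eq_mul_pow_of_succ_eq_mul hπ₁ hstep
  refine ⟨hgeom, ?_⟩
  obtain ⟨k, rfl⟩ : ∃ k, K = k + 1 := ⟨K - 1, by omega⟩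
  calc π (k + 1 + 1) = lm / lj * π (k + 1) := by
        rw [div_mul_eq_mul_div, eq_div_iff hlj.ne', mul_comm, hbalK1]
    _ = (lm / l) ^ (k + 1) := by
        rw [hgeom (k + 1) hK le_rfl, Nat.add_sub_cancel, pow_succ', ← mul_assoc,
          div_mul_div_cancel₀ hlj.ne']

/-- In the FIFO timeline model with `K` slots, rates `lj > 0`, `lm > 0` and
total rate `l = lj + lm`, any nonnegative, normalized solution `π` of the global balance
equations is uniquely determined: `π(x) = (lj/l)·(lm/l)^(x-1)` for `1 ≤ x ≤ K` and
`π(K+1) = (lm/l)^K`. -/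
theorem fifo_stationary_unique
    (K : ℕ) (hK : 1 ≤ K) (lj lm : ℝ) (hlj : 0 < lj) (hlm : 0 < lm)
    (l : ℝ) (hl : l = lj + lm)
    (π : ℕ → ℝ)
    (hnonneg : ∀ x ∈ Finset.Icc 1 (K + 1), 0 ≤ π x)
    (hsum : (∑ x ∈ Finset.Icc 1 (K + 1), π x) = 1)
    (hbal1 : lm * π 1 = lj * (1 - π 1))
    (hbal : ∀ x, 2 ≤ x → x ≤ K → l * π x = lm * π (x - 1))
    (hbalK1 : lj * π (K + 1) = lm * π K) :
    (∀ x, 1 ≤ x → x ≤ K → π x = (lj / l) * (lm / l) ^ (x - 1)) ∧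
      π (K + 1) = (lm / l) ^ K :=
  fifo_stationary_unique_general K hK lj lm hlj l hl π hbal1 hbal hbalK1
end

section
/- (Proposition 1, FIFO visibility.) Let K ≥ 1 be a natural number and let λ_{ij} > 0 and λ_{i,−j} > 0 be real numbers, and set λ_i = λ_{ij} + λ_{i,−j}. Let π : {1,...,K+1} → ℝ be the unique probability vector satisfying the balance equations λ_{i,−j}·π(1) = λ_{ij}·(1 − π(1)), λ_i·π(x) = λ_{i,−j}·π(x−1) for 2 ≤ x ≤ K, and λ_{ij}·π(K+1) = λ_{i,−j}·π(K). Then the visibility of source j in the timeline of user i, defined as π_{ij} = 1 − π(K+1), satisfies π_{ij} = 1 − (λ_{i,−j}/λ_i)^K. -/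
/-! The balance equations are a first-order recursion: the first one says `λ_i π(1) = λ_{ij}`,
the middle ones say `π(x) = (λ_{i,−j}/λ_i) π(x−1)`, so `π(K) = (λ_{i,−j}/λ_i)^(K−1) λ_{ij}/λ_i`,
and the last one multiplies this by `λ_{i,−j}/λ_{ij}`, giving `π(K+1) = (λ_{i,−j}/λ_i)^K`. -/

theorem eq_pow_mul_of_succ_eq_mul {M : Type*} [Monoid M] {f : ℕ → M} {r : M} {m K : ℕ}
    (h : ∀ n, m ≤ n → n < K → f (n + 1) = r * f n) {n : ℕ} (hmn : m ≤ n) (hnK : n ≤ K) :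
    f n = r ^ (n - m) * f m := by
  induction n, hmn using Nat.le_induction with
  | base => simp
  | succ n hmn ih =>
    rw [h n hmn hnK, ih (Nat.le_of_succ_le hnK), Nat.sub_add_comm hmn, pow_succ', mul_assoc]

theorem fifo_visibility_general
    (K : ℕ) (hK : 1 ≤ K) (lij lmj : ℝ) (hlij : 0 < lij)
    (li : ℝ) (hli : li = lij + lmj)
    (π : ℕ → ℝ)
    (hbal1 : lmj * π 1 = lij * (1 - π 1))
    (hbal : ∀ x, 2 ≤ x → x ≤ K → li * π x = lmj * π (x - 1))
    (hbalK1 : lij * π (K + 1) = lmj * π K)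
    (πij : ℝ) (hπij : πij = 1 - π (K + 1)) :
    πij = 1 - (lmj / li) ^ K := by
  have hli_mul_π1 : li * π 1 = lij := by rw [hli]; linarith
  have hli0 : li ≠ 0 := by
    rintro rfl
    exact hlij.ne' (by simpa using hli_mul_π1.symm)
  have hstep : ∀ n, 1 ≤ n → n < K → π (n + 1) = lmj / li * π n := fun n hn hnK => by
    rw [div_mul_eq_mul_div, eq_div_iff hli0, mul_comm, hbal (n + 1) (by omega) hnK,
      Nat.add_sub_cancel]
  have hπ1 : π 1 = lij / li := by rw [eq_div_iff hli0, mul_comm, hli_mul_π1]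
  have hπK : π K = (lmj / li) ^ (K - 1) * (lij / li) := by
    rw [eq_pow_mul_of_succ_eq_mul hstep hK le_rfl, hπ1]
  have hπK1 : π (K + 1) = (lmj / li) ^ K := by
    have hlast : π (K + 1) = lmj / lij * π K := by
      rw [div_mul_eq_mul_div, eq_div_iff hlij.ne', mul_comm, hbalK1]
    obtain ⟨k, rfl⟩ := Nat.exists_eq_add_of_le' hK
    rw [hlast, hπK, Nat.add_sub_cancel, pow_succ']
    field_simp
  rw [hπij, hπK1]

/-- Proposition 1, FIFO visibility: Let `K ≥ 1`, `lij > 0` be the effective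
rate of source `j` into the timeline of user `i`, `lmj > 0` (denoted `λ_{i,−j}`) the
aggregate rate of the other sources, and `li = lij + lmj` the total rate. If `π` is the
(unique) probability vector on `{1, …, K+1}` satisfying the global balance equations of
the FIFO timeline Markov chain, then the visibility `π_{ij} = 1 − π(K+1)` of source `j`
satisfies `π_{ij} = 1 − (λ_{i,−j}/λ_i)^K`. -/
theorem fifo_visibility
    (K : ℕ) (hK : 1 ≤ K) (lij lmj : ℝ) (hlij : 0 < lij) (hlmj : 0 < lmj)
    (li : ℝ) (hli : li = lij + lmj)
    (π : ℕ → ℝ)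
    (hnonneg : ∀ x ∈ Finset.Icc 1 (K + 1), 0 ≤ π x)
    (hsum : (∑ x ∈ Finset.Icc 1 (K + 1), π x) = 1)
    (hbal1 : lmj * π 1 = lij * (1 - π 1))
    (hbal : ∀ x, 2 ≤ x → x ≤ K → li * π x = lmj * π (x - 1))
    (hbalK1 : lij * π (K + 1) = lmj * π K)
    (πij : ℝ) (hπij : πij = 1 - π (K + 1)) :
    πij = 1 - (lmj / li) ^ K :=
  fifo_visibility_general K hK lij lmj hlij li hli π hbal1 hbal hbalK1 πij hπij
end
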